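/- Let 𝒜 be a unital C*-algebra, let a, b ∈ 𝒜 be positive elements, and let t ∈ (1/2, 1). Then ‖a^t b^(1-t) + b^t a^(1-t)‖ ≤ ‖a + b‖^(1/2) · ‖b^(1-t) a^(2t-1) b^(1-t) + a^(1-t) b^(2t-1) a^(1-t)‖^(1/2). -/

import Mathlib

/-!
Write `a^t b^(1-t) + b^t a^(1-t) = x₁ y₁ + x₂ y₂` with `x₁ = a^(1/2)`, `x₂ = b^(1/2)`,
`y₁ = a^(t-1/2) b^(1-t)`, `y₂ = b^(t-1/2) a^(1-t)`. The Cauchy–Schwarz inequality in the Hilbert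
C⋆-module `A²` bounds `‖x₁ y₁ + x₂ y₂‖²` by `‖x₁ x₁* + x₂ x₂*‖ ‖y₁* y₁ + y₂* y₂‖`, and these two
sums are `a + b` and `b^(1-t) a^(2t-1) b^(1-t) + a^(1-t) b^(2t-1) a^(1-t)`. The condition
`t > 1/2` makes `t - 1/2` a positive exponent, for which `a^x a^y = a^(x+y)` holds without
invertibility of `a`.
-/

open scoped InnerProductSpace WithCStarModule

section CauchySchwarz

variable {A : Type*} [NonUnitalCStarAlgebra A] [PartialOrder A] [StarOrderedRing A]

lemma CStarAlgebra.norm_sum_mul_sq_le {ι : Type*} [Fintype ι] (x y : ι → A) :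
    ‖∑ i, x i * y i‖ ^ 2 ≤ ‖∑ i, x i * star (x i)‖ * ‖∑ i, star (y i) * y i‖ := by
  let u : C⋆ᵐᵒᵈ(A, ι → A) := (WithCStarModule.equiv A (ι → A)).symm (star y)
  let v : C⋆ᵐᵒᵈ(A, ι → A) := (WithCStarModule.equiv A (ι → A)).symm x
  have huv : ⟪u, v⟫_A = ∑ i, x i * y i := by
    simp [u, v, WithCStarModule.pi_inner, WithCStarModule.inner_def]
  have huu : ⟪u, u⟫_A = ∑ i, star (y i) * y i := by
    simp [u, WithCStarModule.pi_inner, WithCStarModule.inner_def]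
  have hvv : ⟪v, v⟫_A = ∑ i, x i * star (x i) := by
    simp [v, WithCStarModule.pi_inner, WithCStarModule.inner_def]
  calc ‖∑ i, x i * y i‖ ^ 2 = ‖⟪u, v⟫_A‖ ^ 2 := by rw [huv]
    _ ≤ (‖u‖ * ‖v‖) ^ 2 := by gcongr; exact CStarModule.norm_inner_le _
    _ = ‖∑ i, x i * star (x i)‖ * ‖∑ i, star (y i) * y i‖ := by
      rw [mul_pow, CStarModule.norm_sq_eq A, CStarModule.norm_sq_eq A, huu, hvv, mul_comm]

end CauchySchwarz

namespace CFC

variable {A : Type*} [CStarAlgebra A] [PartialOrder A] [StarOrderedRing A]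

lemma rpow_mul_rpow_of_pos (a : A) {x y : ℝ} (hx : 0 < x) (hy : 0 < y) :
    a ^ x * a ^ y = a ^ (x + y) := by
  simp only [rpow_def]
  rw [← cfc_mul _ _ a (NNReal.continuousOn_rpow_const (.inr hx.le))
    (NNReal.continuousOn_rpow_const (.inr hy.le))]
  exact cfc_congr fun z _ => (NNReal.rpow_add' (by positivity) z).symm

lemma star_rpow (a : A) (x : ℝ) : star (a ^ x) = a ^ x :=
  rpow_nonneg.isSelfAdjoint.star_eq

lemma rpow_half_mul_rpow_half (a : A) (ha : 0 ≤ a := by cfc_tac) :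
    a ^ (1 / 2 : ℝ) * a ^ (1 / 2 : ℝ) = a := by
  rw [rpow_mul_rpow_of_pos a (by norm_num) (by norm_num)]
  norm_num [rpow_one a ha]

lemma star_rpow_mul_mul_rpow_mul (a c : A) {s : ℝ} (hs : 0 < s) :
    star (a ^ s * c) * (a ^ s * c) = star c * a ^ (2 * s) * c := by
  rw [star_mul, star_rpow, two_mul, ← rpow_mul_rpow_of_pos a hs hs]
  noncomm_ring

end CFC

open CFC in
theorem bridge_inequality_cstar {A : Type*} [CStarAlgebra A]
    [PartialOrder A] [StarOrderedRing A]
    (a b : A) (ha : 0 ≤ a) (hb : 0 ≤ b) (t : ℝ)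
    (ht : t ∈ Set.Ioo (1 / 2 : ℝ) 1) :
    ‖CFC.rpow a t * CFC.rpow b (1 - t) + CFC.rpow b t * CFC.rpow a (1 - t)‖ ≤
      ‖a + b‖ ^ (1 / 2 : ℝ) *
        ‖CFC.rpow b (1 - t) * CFC.rpow a (2 * t - 1) * CFC.rpow b (1 - t) +
          CFC.rpow a (1 - t) * CFC.rpow b (2 * t - 1) * CFC.rpow a (1 - t)‖ ^ (1 / 2 : ℝ) := by
  simp only [rpow_eq_pow]
  have hs : 0 < t - 1 / 2 := by linarith [ht.1]
  have hsplit : ∀ c : A, c ^ (1 / 2 : ℝ) * c ^ (t - 1 / 2) = c ^ t := fun c => by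
    rw [rpow_mul_rpow_of_pos c (by norm_num) hs]; norm_num
  have hexp : 2 * (t - 1 / 2) = 2 * t - 1 := by ring
  have hcs := CStarAlgebra.norm_sum_mul_sq_le ![a ^ (1 / 2 : ℝ), b ^ (1 / 2 : ℝ)]
    ![a ^ (t - 1 / 2) * b ^ (1 - t), b ^ (t - 1 / 2) * a ^ (1 - t)]
  simp only [Fin.sum_univ_two, Matrix.cons_val_zero, Matrix.cons_val_one, star_rpow,
    rpow_half_mul_rpow_half a ha, rpow_half_mul_rpow_half b hb,
    star_rpow_mul_mul_rpow_mul _ _ hs, ← mul_assoc,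
    hsplit, hexp] at hcs
  rw [← Real.mul_rpow (norm_nonneg _) (norm_nonneg _), ← Real.sqrt_eq_rpow]
  exact Real.le_sqrt_of_sq_le hcs
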